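/- For p, q ≥ 1, the set D = {u : ℓ_p → ℓ_q : u linear, continuous and non-surjective} is (1, 𝔠)-lineable: every one-dimensional subspace of L(ℓ_p, ℓ_q) contained in D ∪ {0} is contained in a 𝔠-dimensional subspace contained in D ∪ {0}. -/

import Mathlib

/-!
Pick `x₀` with `v x₀ ≠ 0`. The operators whose range lies in `range v` form a subspace, all of
whose elements are non-surjective along with `v`; it contains `v` and every rank-one operator
`x ↦ φ x • v x₀`. The functionals `φ_t x = ∑ tⁿ xₙ` for `|t| < 1` send the unit vector `eₙ` to
`tⁿ`, so Dedekind's independence of the characters `n ↦ tⁿ` of `ℕ` makes them linearly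
independent: a continuum of independent operators with range in `range v`, whose span with `v`
has dimension `𝔠`.
-/

open Set Cardinal

universe u

theorem Submodule.exists_le_mem_rank_eq_of_linearIndependent {R : Type*} {M ι : Type u} [Ring R]
    [StrongRankCondition R] [AddCommGroup M] [Module R M] [Infinite ι] {f : ι → M}
    (hf : LinearIndependent R f) {S : Submodule R M} (hfS : ∀ i, f i ∈ S) {v : M}
    (hv : v ∈ S) : ∃ W ≤ S, v ∈ W ∧ Module.rank R W = #ι := by
  have := nontrivial_of_invariantBasisNumber R
  have hcard : #(range f) = #ι := mk_range_eq f hf.injective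
  refine ⟨span R (insert v (range f)), span_le.mpr (insert_subset hv (range_subset_iff.mpr hfS)),
    subset_span (mem_insert v _), le_antisymm ?_ ?_⟩
  · calc Module.rank R (span R (insert v (range f)))
        ≤ #(insert v (range f) : Set M) := rank_span_le _
      _ ≤ #(range f) + 1 := mk_insert_le
      _ = #ι := by rw [hcard, add_one_of_aleph0_le (aleph0_le_mk ι)]
  · calc #ι = Module.rank R (span R (range f)) := by rw [rank_span hf, hcard]
      _ ≤ _ := rank_mono (span_mono (subset_insert v _))

theorem linearIndependent_pow_seq (K : Type*) [CommRing K] [IsDomain K] :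
    LinearIndependent K (fun (t : K) (n : ℕ) => t ^ n) :=
  (linearIndependent_monoidHom (Multiplicative ℕ) K).comp (powersHom K) (powersHom K).injective

section GeomFunctional

variable {𝕜 : Type*} [NontriviallyNormedField 𝕜] {p : ENNReal} [Fact (1 ≤ p)]

theorem lp.norm_evalCLM_le (n : ℕ) : ‖lp.evalCLM 𝕜 (fun _ : ℕ => 𝕜) p n‖ ≤ 1 :=
  LinearMap.mkContinuous_norm_le _ zero_le_one _

-- For `‖t‖ ≥ 1` the series need not converge and the `tsum` is a junk value.
variable (p) in
noncomputable def lp.geomFunctional (t : 𝕜) : lp (fun _ : ℕ => 𝕜) p →L[𝕜] 𝕜 :=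
  ∑' n, t ^ n • lp.evalCLM 𝕜 (fun _ : ℕ => 𝕜) p n

theorem lp.summable_geomFunctional [CompleteSpace 𝕜] {t : 𝕜} (ht : ‖t‖ < 1) :
    Summable fun n : ℕ => t ^ n • lp.evalCLM 𝕜 (fun _ : ℕ => 𝕜) p n := by
  refine .of_norm_bounded (summable_geometric_of_lt_one (norm_nonneg t) ht) fun n => ?_
  calc ‖t ^ n • lp.evalCLM 𝕜 (fun _ : ℕ => 𝕜) p n‖
      = ‖t‖ ^ n * ‖lp.evalCLM 𝕜 (fun _ : ℕ => 𝕜) p n‖ := by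
        rw [norm_smul, norm_pow]
    _ ≤ ‖t‖ ^ n := mul_le_of_le_one_right (by positivity) (lp.norm_evalCLM_le n)

theorem lp.geomFunctional_single [CompleteSpace 𝕜] {t : 𝕜} (ht : ‖t‖ < 1) (m : ℕ) :
    lp.geomFunctional p t (lp.single p m 1) = t ^ m := by
  rw [lp.geomFunctional, ← ContinuousLinearMap.apply_apply (𝕜 := 𝕜),
    ← ((lp.summable_geomFunctional ht).hasSum.mapL
      (ContinuousLinearMap.apply 𝕜 𝕜 (lp.single p m 1))).tsum_eq,
    tsum_eq_single m]
  · simp [lp.evalCLM]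
  · intro n hn
    simp [lp.evalCLM, hn]

theorem lp.linearIndependent_geomFunctional [CompleteSpace 𝕜] :
    LinearIndependent 𝕜 fun t : Metric.ball (0 : 𝕜) 1 => lp.geomFunctional p (t : 𝕜) := by
  let restrictToBasis : (lp (fun _ : ℕ => 𝕜) p →L[𝕜] 𝕜) →ₗ[𝕜] ℕ → 𝕜 :=
    LinearMap.pi fun n => (ContinuousLinearMap.apply 𝕜 𝕜 (lp.single p n 1)).toLinearMap
  refine .of_comp restrictToBasis ?_
  have : restrictToBasis ∘ (fun t : Metric.ball (0 : 𝕜) 1 => lp.geomFunctional p (t : 𝕜)) =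
      (fun (t : 𝕜) (n : ℕ) => t ^ n) ∘ Subtype.val := by
    funext t n
    exact lp.geomFunctional_single (mem_ball_zero_iff.mp t.2) n
  rw [this]
  exact (linearIndependent_pow_seq 𝕜).comp _ Subtype.val_injective

end GeomFunctional

namespace ContinuousLinearMap

variable {𝕜 E F : Type*} [NontriviallyNormedField 𝕜] [NormedAddCommGroup E] [NormedSpace 𝕜 E]
  [NormedAddCommGroup F] [NormedSpace 𝕜 F]

variable (E) in
def mapsInto (V : Submodule 𝕜 F) : Submodule 𝕜 (E →L[𝕜] F) where
  carrier := {u | ∀ x, u x ∈ V}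
  add_mem' hu hv x := V.add_mem (hu x) (hv x)
  zero_mem' _ := V.zero_mem
  smul_mem' c _ hu x := V.smul_mem c (hu x)

theorem smulRight_mem_mapsInto (φ : StrongDual 𝕜 E) {V : Submodule 𝕜 F} {y : F} (hy : y ∈ V) :
    φ.smulRight y ∈ mapsInto E V :=
  fun x => V.smul_mem (φ x) hy

theorem self_mem_mapsInto_range (v : E →L[𝕜] F) :
    v ∈ mapsInto E (LinearMap.range (v : E →ₗ[𝕜] F)) :=
  LinearMap.mem_range_self (v : E →ₗ[𝕜] F)

theorem eq_top_of_surjective_of_mem_mapsInto {V : Submodule 𝕜 F} {u : E →L[𝕜] F}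
    (hu : u ∈ mapsInto E V) (hsurj : Function.Surjective u) : V = ⊤ :=
  eq_top_iff.mpr fun y _ => by
    obtain ⟨x, rfl⟩ := hsurj y
    exact hu x

theorem _root_.LinearIndependent.smulRight {ι : Type*} {φ : ι → StrongDual 𝕜 E}
    (hφ : LinearIndependent 𝕜 φ) {y : F} (hy : y ≠ 0) :
    LinearIndependent 𝕜 fun i => (φ i).smulRight y := by
  refine hφ.map' ((smulRightL 𝕜 E F).flip y).toLinearMap
    (LinearMap.ker_eq_bot'.mpr fun ψ hψ => ?_)
  have : ‖ψ.smulRight y‖ = 0 := by simpa using congrArg norm hψ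
  simpa [norm_smulRight_apply, hy] using this

end ContinuousLinearMap

theorem stmt8_general (p q : ENNReal) [Fact (1 ≤ p)] [Fact (1 ≤ q)]
    (v : lp (fun _ : ℕ => ℝ) p →L[ℝ] lp (fun _ : ℕ => ℝ) q)
    (hv : v ≠ 0) (hsurj : ¬ Function.Surjective ⇑v) :
    ∃ W : Submodule ℝ (lp (fun _ : ℕ => ℝ) p →L[ℝ] lp (fun _ : ℕ => ℝ) q),
      Module.rank ℝ W = Cardinal.continuum ∧ v ∈ W ∧
      ∀ u ∈ W, u ≠ 0 → ¬ Function.Surjective ⇑u := by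
  obtain ⟨x₀, hx₀⟩ : ∃ x, v x ≠ 0 := DFunLike.ne_iff.mp hv
  have hball : #(Metric.ball (0 : ℝ) 1) = 𝔠 := by
    rw [Real.ball_eq_Ioo]
    exact mk_Ioo_real (by norm_num)
  have : Infinite (Metric.ball (0 : ℝ) 1) := infinite_iff.mpr (hball ▸ aleph0_le_continuum)
  let V := LinearMap.range (v : lp (fun _ : ℕ => ℝ) p →ₗ[ℝ] lp (fun _ : ℕ => ℝ) q)
  have hind := (lp.linearIndependent_geomFunctional (𝕜 := ℝ) (p := p)).smulRight hx₀
  obtain ⟨W, hWS, hvW, hrank⟩ := Submodule.exists_le_mem_rank_eq_of_linearIndependent hind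
    (S := ContinuousLinearMap.mapsInto _ V)
    (fun _ => ContinuousLinearMap.smulRight_mem_mapsInto _ ⟨x₀, rfl⟩)
    (ContinuousLinearMap.self_mem_mapsInto_range v)
  refine ⟨W, hrank.trans hball, hvW, fun u hu _ husurj => hsurj ?_⟩
  exact LinearMap.range_eq_top.mp
    (ContinuousLinearMap.eq_top_of_surjective_of_mem_mapsInto (hWS hu) husurj)

/-- For p, q ≥ 1, the set of non-surjective continuous linear operators
ℓ_p → ℓ_q is (1, 𝔠)-lineable. -/
theorem stmt8 (p q : ENNReal) [Fact (1 ≤ p)] [Fact (1 ≤ q)] (hp : p ≠ ⊤) (hq : q ≠ ⊤)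
    (v : lp (fun _ : ℕ => ℝ) p →L[ℝ] lp (fun _ : ℕ => ℝ) q)
    (hv : v ≠ 0) (hsurj : ¬ Function.Surjective ⇑v) :
    ∃ W : Submodule ℝ (lp (fun _ : ℕ => ℝ) p →L[ℝ] lp (fun _ : ℕ => ℝ) q),
      Module.rank ℝ W = Cardinal.continuum ∧ v ∈ W ∧
      ∀ u ∈ W, u ≠ 0 → ¬ Function.Surjective ⇑u :=
  stmt8_general p q v hv hsurj
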